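/- There exists C > 0 such that for all x, y ∈ ℝ² with x ≠ y: ∫_{0}^{∞} (|x − R_a y|² + a²)^{−3/2} da ≤ C ( 1 + (1 + min{|x|, |y|}) / |x − y|² ). -/

import Mathlib

/-!
In polar coordinates (`r = |x|`, `s = |y|`, `θ ∈ [0, 2π]` the angle from `x` to `y`) the
integrand is `(r² + s² - 2rs cos (a - θ) + a²)^{-3/2}`, and `d² := |x - y|²` equals
`r² + s² - 2rs cos θ`. Split `(0, ∞)` at `θ/2` and `θ + π`. Beyond `θ + π ≥ 1` the integrand
is at most `a⁻³`. On `[0, θ/2]` the angle `θ - a` stays in `[θ/2, θ]`, which keeps the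
cosine-law term above `d²/4`. On `[θ/2, θ + π]` the bounds `1 - cos v ≥ v²/8` and
`a² ≥ θ²/8 + (a - θ)²/2` dominate the integrand by `(c + Q (a - θ)²)^{-3/2}` with
`c = (r - s)² + θ²/8`, `Q = (rs + 2)/4`, whose integral over `ℝ` is `2/(c√Q)`. Finally
`d² ≤ 100 (1 + min(r, s)) c √Q`: either `d² ≤ 2 (r - s)²`, or `(r - s)² ≤ 4rs`, and then
`√(rs) ≤ 3 min(r, s)`.
-/

open MeasureTheory Real intervalIntegral

/-- Euclidean norm on `ℝ²`. -/
noncomputable def vnorm (x : ℝ × ℝ) : ℝ := Real.sqrt (x.1 ^ 2 + x.2 ^ 2)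

/-- Rotation `R_a` on `ℝ²`. -/
noncomputable def vrot (a : ℝ) (x : ℝ × ℝ) : ℝ × ℝ :=
  (x.1 * Real.cos a + x.2 * Real.sin a, -x.1 * Real.sin a + x.2 * Real.cos a)

/-- Japanese bracket `⟨x⟩ = √(1+|x|²)` on `ℝ²`. -/
noncomputable def jap (x : ℝ × ℝ) : ℝ := Real.sqrt (1 + x.1 ^ 2 + x.2 ^ 2)

open Set

noncomputable def cosineLaw (r s φ : ℝ) : ℝ := r ^ 2 + s ^ 2 - 2 * r * s * cos φ

section CosineLaw

variable {r s : ℝ}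

lemma cosineLaw_eq (r s φ : ℝ) : cosineLaw r s φ = (r - s) ^ 2 + 2 * r * s * (1 - cos φ) := by
  unfold cosineLaw; ring

lemma cosineLaw_neg (r s φ : ℝ) : cosineLaw r s (-φ) = cosineLaw r s φ := by
  simp only [cosineLaw, cos_neg]

lemma sq_sub_le_cosineLaw (hr : 0 ≤ r) (hs : 0 ≤ s) (φ : ℝ) :
    (r - s) ^ 2 ≤ cosineLaw r s φ := by
  rw [cosineLaw_eq]
  nlinarith [cos_le_one φ, mul_nonneg hr hs]

lemma one_sub_cos_div_four_le {θ u : ℝ} (hθ : θ ∈ Icc 0 (2 * π))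
    (hu : u ∈ Icc (θ / 2) θ) :
    (1 - cos θ) / 4 ≤ 1 - cos u := by
  obtain ⟨hθ0, hθ2⟩ := hθ
  obtain ⟨hu1, hu2⟩ := hu
  -- `cos` has no interior maximum on `[θ/2, θ] ⊆ [0, 2π]`; then use the half-angle formula.
  have hcos : cos u ≤ max (cos (θ / 2)) (cos θ) := by
    rcases le_total u π with h | h
    · exact le_max_of_le_left (cos_le_cos_of_nonneg_of_le_pi (by linarith) h hu1)
    · rw [← cos_two_pi_sub u, ← cos_two_pi_sub θ]
      exact le_max_of_le_right
        (cos_le_cos_of_nonneg_of_le_pi (by linarith) (by linarith [pi_pos]) (by linarith))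
  have hhalf : cos (θ / 2) ^ 2 = 1 / 2 + cos θ / 2 := by
    rw [cos_sq, show 2 * (θ / 2) = θ by ring]
  rcases le_max_iff.mp hcos with h | h
  · nlinarith [cos_le_one (θ / 2), neg_one_le_cos (θ / 2)]
  · linarith [cos_le_one θ]

lemma cosineLaw_le_four_mul (hr : 0 ≤ r) (hs : 0 ≤ s) {θ u : ℝ} (hθ : θ ∈ Icc 0 (2 * π))
    (hu : u ∈ Icc (θ / 2) θ) : cosineLaw r s θ / 4 ≤ cosineLaw r s u := by
  rw [cosineLaw_eq, cosineLaw_eq]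
  have := mul_le_mul_of_nonneg_left (one_sub_cos_div_four_le hθ hu) (mul_nonneg hr hs)
  nlinarith [sq_nonneg (r - s)]

lemma sq_sub_add_mul_sq_le_cosineLaw (hr : 0 ≤ r) (hs : 0 ≤ s) {v : ℝ} (hv : |v| ≤ π) :
    (r - s) ^ 2 + r * s / 4 * v ^ 2 ≤ cosineLaw r s v := by
  rw [cosineLaw_eq]
  have hπ : π ^ 2 ≤ 16 := by nlinarith [pi_pos, pi_lt_four]
  have hv2 : v ^ 2 / 8 ≤ 2 / π ^ 2 * v ^ 2 := by
    rw [div_mul_eq_mul_div, le_div_iff₀ (by positivity)]; nlinarith [sq_nonneg v]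
  have hcos : v ^ 2 / 8 ≤ 1 - cos v := by linarith [cos_le_one_sub_mul_cos_sq hv]
  nlinarith [mul_le_mul_of_nonneg_left hcos (mul_nonneg hr hs)]

lemma mul_le_six_min_mul_sqrt (hr : 0 ≤ r) (hs : 0 ≤ s)
    (h : (r - s) ^ 2 ≤ 4 * (r * s)) : r * s ≤ 6 * min r s * √((r * s + 2) / 4) := by
  have hmin : √(r * s) ≤ 3 * min r s := by
    rw [sqrt_le_left (by positivity)]
    rcases le_total r s with h' | h'
    · rw [min_eq_left h']; nlinarith [sq_nonneg (s - 6 * r)]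
    · rw [min_eq_right h']; nlinarith [sq_nonneg (r - 6 * s)]
  have hQ : √(r * s) ≤ 2 * √((r * s + 2) / 4) := by
    rw [← sqrt_sq (zero_le_two : (0 : ℝ) ≤ 2), ← sqrt_mul (by norm_num)]
    exact sqrt_le_sqrt (by linarith)
  calc r * s = √(r * s) * √(r * s) := (mul_self_sqrt (mul_nonneg hr hs)).symm
    _ ≤ (3 * min r s) * (2 * √((r * s + 2) / 4)) :=
      mul_le_mul hmin hQ (sqrt_nonneg _) (by positivity)
    _ = 6 * min r s * √((r * s + 2) / 4) := by ring

lemma cosineLaw_le_mul_sqrt (hr : 0 ≤ r) (hs : 0 ≤ s) (θ : ℝ) :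
    cosineLaw r s θ ≤
      100 * (1 + min r s) * (((r - s) ^ 2 + θ ^ 2 / 8) * √((r * s + 2) / 4)) := by
  have hm : 0 ≤ min r s := le_min hr hs
  have hc : 0 ≤ (r - s) ^ 2 + θ ^ 2 / 8 := by positivity
  have hQ : 1 / 2 ≤ √((r * s + 2) / 4) := by
    rw [le_sqrt (by norm_num) (by positivity)]; nlinarith [mul_nonneg hr hs]
  have hrs := mul_nonneg hr hs
  rw [cosineLaw_eq]
  rcases le_or_gt (2 * r * s * (1 - cos θ)) ((r - s) ^ 2) with hcase | hcase
  · nlinarith [mul_le_mul_of_nonneg_left hQ hc,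
      mul_nonneg hm (mul_nonneg hc (sqrt_nonneg ((r * s + 2) / 4)))]
  · have hcos : 1 - cos θ ≤ θ ^ 2 / 2 := by linarith [one_sub_sq_div_two_le_cos (x := θ)]
    have hsix := mul_le_six_min_mul_sqrt hr hs (by nlinarith [neg_one_le_cos θ])
    nlinarith [mul_le_mul_of_nonneg_left hcos hrs, mul_le_mul_of_nonneg_right hsix hc,
      mul_nonneg hrs (sq_nonneg (r - s))]

end CosineLaw

lemma vnorm_sq (z : ℝ × ℝ) : vnorm z ^ 2 = z.1 ^ 2 + z.2 ^ 2 :=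
  sq_sqrt (by positivity)

lemma vnorm_nonneg (z : ℝ × ℝ) : 0 ≤ vnorm z := sqrt_nonneg _

lemma vnorm_pos {z : ℝ × ℝ} (hz : z ≠ 0) : 0 < vnorm z := by
  refine sqrt_pos.mpr ?_
  rcases eq_or_ne z.1 0 with h1 | h1
  · have h2 : z.2 ≠ 0 := fun h2 => hz (Prod.ext h1 h2)
    positivity
  · positivity

lemma vrot_zero (y : ℝ × ℝ) : vrot 0 y = y := by
  simp [vrot]

/-- `θ` is the argument of `conj x * y`, viewing `x, y` as complex numbers. -/
lemma exists_angle_dot_cross (x y : ℝ × ℝ) : ∃ θ ∈ Icc 0 (2 * π),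
    x.1 * y.1 + x.2 * y.2 = vnorm x * vnorm y * cos θ ∧
    x.1 * y.2 - x.2 * y.1 = vnorm x * vnorm y * sin θ := by
  set z : ℂ := ⟨x.1 * y.1 + x.2 * y.2, x.1 * y.2 - x.2 * y.1⟩
  have hz : ‖z‖ = vnorm x * vnorm y := by
    rw [Complex.norm_def, Complex.normSq_mk, vnorm, vnorm, ← sqrt_mul (by positivity)]
    congr 1; ring
  have hc := Complex.norm_mul_cos_arg z
  have hs := Complex.norm_mul_sin_arg z
  rw [hz] at hc hs
  have h1 := Complex.neg_pi_lt_arg z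
  have h2 := Complex.arg_le_pi z
  rcases le_or_gt 0 z.arg with h | h
  · exact ⟨z.arg, ⟨h, by linarith [pi_pos]⟩, hc.symm, hs.symm⟩
  · refine ⟨z.arg + 2 * π, ⟨by linarith, by linarith⟩, ?_, ?_⟩
    · rw [cos_add_two_pi]; exact hc.symm
    · rw [sin_add_two_pi]; exact hs.symm

lemma vnorm_sub_vrot_sq {x y : ℝ × ℝ} {θ : ℝ}
    (hdot : x.1 * y.1 + x.2 * y.2 = vnorm x * vnorm y * cos θ)
    (hcross : x.1 * y.2 - x.2 * y.1 = vnorm x * vnorm y * sin θ) (a : ℝ) :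
    vnorm (x - vrot a y) ^ 2 = cosineLaw (vnorm x) (vnorm y) (a - θ) := by
  rw [cosineLaw, vnorm_sq, vnorm_sq x, vnorm_sq y, cos_sub]
  simp only [vrot, Prod.fst_sub, Prod.snd_sub]
  linear_combination (y.1 ^ 2 + y.2 ^ 2) * sin_sq_add_cos_sq a - 2 * cos a * hdot -
    2 * sin a * hcross

section Kernel

lemma one_div_sqrt_pow_three_anti {u v : ℝ} (hu : 0 < u) (huv : u ≤ v) :
    1 / √v ^ 3 ≤ 1 / √u ^ 3 := by
  have := sqrt_pos.mpr hu
  gcongr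

lemma one_div_sqrt_pow_three_le_rpow {a u : ℝ} (ha : 0 < a) (h : a ^ 2 ≤ u) :
    1 / √u ^ 3 ≤ a ^ (-3 : ℝ) := by
  calc 1 / √u ^ 3 ≤ 1 / √(a ^ 2) ^ 3 := one_div_sqrt_pow_three_anti (by positivity) h
    _ = a ^ (-3 : ℝ) := by
      rw [sqrt_sq ha.le, rpow_neg ha.le, one_div]; norm_cast

lemma integrableOn_Ioi_of_le_rpow {f : ℝ → ℝ} {T p : ℝ} (hp : p < -1) (hT : 0 < T)
    (hf : ContinuousOn f (Ioi T)) (h0 : ∀ a ∈ Ioi T, 0 ≤ f a)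
    (hle : ∀ a ∈ Ioi T, f a ≤ a ^ p) : IntegrableOn f (Ioi T) := by
  refine (integrableOn_Ioi_rpow_of_lt hp hT).mono' (hf.aestronglyMeasurable measurableSet_Ioi) ?_
  filter_upwards [ae_restrict_mem measurableSet_Ioi] with a ha
  rw [norm_of_nonneg (h0 a ha)]
  exact hle a ha

lemma setIntegral_Ioi_le_of_le_rpow {f : ℝ → ℝ} {T p : ℝ} (hp : p < -1) (hT : 0 < T)
    (hf : IntegrableOn f (Ioi T)) (hle : ∀ a ∈ Ioi T, f a ≤ a ^ p) :
    ∫ a in Ioi T, f a ≤ -T ^ (p + 1) / (p + 1) := by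
  rw [← integral_Ioi_rpow_of_lt hp hT]
  exact setIntegral_mono_on hf (integrableOn_Ioi_rpow_of_lt hp hT) measurableSet_Ioi hle

variable {c Q θ : ℝ}

lemma hasDerivAt_div_sqrt_quadratic (hc : 0 < c) (hQ : 0 ≤ Q) (a : ℝ) :
    HasDerivAt (fun b => (b - θ) / (c * √(c + Q * (b - θ) ^ 2)))
      (1 / √(c + Q * (a - θ) ^ 2) ^ 3) a := by
  have hpos : 0 < c + Q * (a - θ) ^ 2 := by positivity
  have hlin : HasDerivAt (fun b : ℝ => b - θ) 1 a := (hasDerivAt_id a).sub_const θ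
  have hquad : HasDerivAt (fun b : ℝ => c + Q * (b - θ) ^ 2) (2 * Q * (a - θ)) a := by
    refine (((hlin.pow 2).const_mul Q).const_add c).congr_deriv ?_
    simp only [Nat.cast_ofNat]; ring
  have hsqrt := sqrt_pos.mpr hpos
  refine (hlin.div ((hquad.sqrt hpos.ne').const_mul c) (by positivity)).congr_deriv ?_
  field_simp
  linear_combination sq_sqrt hpos.le

lemma abs_div_sqrt_quadratic_le (hc : 0 < c) (hQ : 0 < Q) (t : ℝ) :
    |t / (c * √(c + Q * t ^ 2))| ≤ 1 / (c * √Q) := by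
  have hsqrt : √Q * |t| ≤ √(c + Q * t ^ 2) := by
    rw [← sqrt_sq_eq_abs, ← sqrt_mul hQ.le]
    exact sqrt_le_sqrt (by linarith)
  have := sqrt_pos.mpr hQ
  have : 0 < √(c + Q * t ^ 2) := sqrt_pos.mpr (by positivity)
  rw [abs_div, abs_of_pos (by positivity : 0 < c * √(c + Q * t ^ 2)),
    div_le_div_iff₀ (by positivity) (by positivity)]
  nlinarith

lemma continuous_one_div_sqrt_quadratic_pow_three (hc : 0 < c) (hQ : 0 ≤ Q) :
    Continuous fun a => 1 / √(c + Q * (a - θ) ^ 2) ^ 3 := by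
  refine continuous_const.div (by fun_prop) fun a => ?_
  have := sqrt_pos.mpr (by positivity : 0 < c + Q * (a - θ) ^ 2)
  positivity

/-- `∫_ℝ (c + Q t²)^{-3/2} dt = 2 / (c √Q)`, so every finite piece is at most that. -/
lemma integral_one_div_sqrt_quadratic_pow_three_le (hc : 0 < c) (hQ : 0 < Q) (A B : ℝ) :
    ∫ a in A..B, 1 / √(c + Q * (a - θ) ^ 2) ^ 3 ≤ 2 / (c * √Q) := by
  rw [integral_eq_sub_of_hasDerivAt (fun a _ => hasDerivAt_div_sqrt_quadratic hc hQ.le a)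
    ((continuous_one_div_sqrt_quadratic_pow_three hc hQ.le).intervalIntegrable A B)]
  have hB := (abs_le.mp (abs_div_sqrt_quadratic_le hc hQ (B - θ))).2
  have hA := (abs_le.mp (abs_div_sqrt_quadratic_le hc hQ (A - θ))).1
  linarith [show 2 / (c * √Q) = 2 * (1 / (c * √Q)) by ring]

end Kernel

/-- The integrand `(|x - R_a y|² + a²)^{-3/2}` in polar coordinates: `r = |x|`, `s = |y|`, and
`θ` is the angle from `x` to `y`. -/
noncomputable def rotKernel (r s θ a : ℝ) : ℝ := 1 / √(cosineLaw r s (a - θ) + a ^ 2) ^ 3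

section RotKernel

variable {r s θ : ℝ}

lemma cosineLaw_sub_add_sq_pos (hr : 0 ≤ r) (hs : 0 ≤ s) (hd : 0 < cosineLaw r s θ) (a : ℝ) :
    0 < cosineLaw r s (a - θ) + a ^ 2 := by
  rcases eq_or_ne a 0 with rfl | ha
  · simpa [cosineLaw_neg] using hd
  · have : 0 < a ^ 2 := by positivity
    linarith [sq_sub_le_cosineLaw hr hs (a - θ), sq_nonneg (r - s)]

lemma continuous_rotKernel (hr : 0 ≤ r) (hs : 0 ≤ s) (hd : 0 < cosineLaw r s θ) :
    Continuous (rotKernel r s θ) := by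
  refine continuous_const.div (by unfold cosineLaw; fun_prop) fun a => ?_
  have := sqrt_pos.mpr (cosineLaw_sub_add_sq_pos hr hs hd a)
  positivity

lemma rotKernel_le_rpow (hr : 0 ≤ r) (hs : 0 ≤ s) {a : ℝ} (ha : 0 < a) :
    rotKernel r s θ a ≤ a ^ (-3 : ℝ) :=
  one_div_sqrt_pow_three_le_rpow ha (by nlinarith [sq_sub_le_cosineLaw hr hs (a - θ)])

lemma integrableOn_Ioi_rotKernel (hr : 0 ≤ r) (hs : 0 ≤ s) (hd : 0 < cosineLaw r s θ) {T : ℝ}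
    (hT : 0 < T) : IntegrableOn (rotKernel r s θ) (Ioi T) :=
  integrableOn_Ioi_of_le_rpow (by norm_num) hT (continuous_rotKernel hr hs hd).continuousOn
    (fun a _ => by unfold rotKernel; positivity) fun a ha => rotKernel_le_rpow hr hs (hT.trans ha)

lemma setIntegral_Ioi_rotKernel_le (hr : 0 ≤ r) (hs : 0 ≤ s) (hd : 0 < cosineLaw r s θ)
    {T : ℝ} (hT : 1 ≤ T) : ∫ a in Ioi T, rotKernel r s θ a ≤ 1 / 2 := by
  have hT0 : 0 < T := by linarith
  refine (setIntegral_Ioi_le_of_le_rpow (p := -3) (by norm_num) hT0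
    (integrableOn_Ioi_rotKernel hr hs hd hT0)
    fun a ha => rotKernel_le_rpow hr hs (hT0.trans ha)).trans ?_
  have : T ^ (-3 + 1 : ℝ) ≤ 1 := rpow_le_one_of_one_le_of_nonpos hT (by norm_num)
  rw [show (-3 + 1 : ℝ) = -2 by norm_num] at this ⊢
  linarith

lemma integral_rotKernel_near_le (hr : 0 ≤ r) (hs : 0 ≤ s) (hθ : θ ∈ Icc 0 (2 * π))
    (hd : 0 < cosineLaw r s θ) :
    ∫ a in 0..θ / 2, rotKernel r s θ a ≤ 8 / cosineLaw r s θ := by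
  have hc : 0 < cosineLaw r s θ / 4 := by positivity
  calc ∫ a in 0..θ / 2, rotKernel r s θ a
      ≤ ∫ a in 0..θ / 2, 1 / √(cosineLaw r s θ / 4 + 1 * (a - 0) ^ 2) ^ 3 := by
        refine integral_mono_on (by linarith [hθ.1])
          ((continuous_rotKernel hr hs hd).intervalIntegrable _ _)
          ((continuous_one_div_sqrt_quadratic_pow_three hc zero_le_one).intervalIntegrable _ _)
          fun a ha => one_div_sqrt_pow_three_anti (by positivity) ?_
        have hnear := cosineLaw_le_four_mul hr hs (u := θ - a) hθ
          ⟨by linarith [ha.2], by linarith [ha.1]⟩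
        rw [← neg_sub θ a, cosineLaw_neg]
        nlinarith
    _ ≤ 2 / (cosineLaw r s θ / 4 * √1) :=
        integral_one_div_sqrt_quadratic_pow_three_le hc one_pos _ _
    _ = 8 / cosineLaw r s θ := by rw [sqrt_one]; field_simp; norm_num

lemma integral_rotKernel_mid_le (hr : 0 ≤ r) (hs : 0 ≤ s) (hθ : θ ∈ Icc 0 (2 * π))
    (hd : 0 < cosineLaw r s θ) :
    ∫ a in θ / 2..θ + π, rotKernel r s θ a ≤ 200 * (1 + min r s) / cosineLaw r s θ := by
  have hc : 0 < (r - s) ^ 2 + θ ^ 2 / 8 := by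
    rcases eq_or_ne θ 0 with rfl | hθ0
    · simpa [cosineLaw_eq] using hd
    · positivity
  have hQ : 0 < (r * s + 2) / 4 := by positivity
  calc ∫ a in θ / 2..θ + π, rotKernel r s θ a
      ≤ ∫ a in θ / 2..θ + π,
          1 / √((r - s) ^ 2 + θ ^ 2 / 8 + (r * s + 2) / 4 * (a - θ) ^ 2) ^ 3 := by
        refine integral_mono_on (by linarith [hθ.1, pi_pos])
          ((continuous_rotKernel hr hs hd).intervalIntegrable _ _)
          ((continuous_one_div_sqrt_quadratic_pow_three hc hQ.le).intervalIntegrable _ _)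
          fun a ha => one_div_sqrt_pow_three_anti (by positivity) ?_
        obtain ⟨ha1, ha2⟩ := ha
        have hv : |a - θ| ≤ π := abs_le.mpr ⟨by linarith [hθ.2], by linarith⟩
        have hcurv := sq_sub_add_mul_sq_le_cosineLaw hr hs hv
        have hsq : θ ^ 2 / 8 + (a - θ) ^ 2 / 2 ≤ a ^ 2 := by
          nlinarith [mul_nonneg (sub_nonneg.mpr ha1)
            (by linarith [hθ.1] : 0 ≤ a / 2 + 5 * θ / 4)]
        linarith
    _ ≤ 2 / (((r - s) ^ 2 + θ ^ 2 / 8) * √((r * s + 2) / 4)) :=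
        integral_one_div_sqrt_quadratic_pow_three_le hc hQ _ _
    _ ≤ 200 * (1 + min r s) / cosineLaw r s θ := by
        have := sqrt_pos.mpr hQ
        rw [div_le_div_iff₀ (by positivity) hd]
        linarith [cosineLaw_le_mul_sqrt hr hs θ]

theorem integral_rotKernel_le (hr : 0 ≤ r) (hs : 0 ≤ s) (hθ : θ ∈ Icc 0 (2 * π))
    (hd : 0 < cosineLaw r s θ) :
    ∫ a in Ioi 0, rotKernel r s θ a ≤ 208 * (1 + (1 + min r s) / cosineLaw r s θ) := by
  have hcont := continuous_rotKernel hr hs hd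
  have hT : 1 ≤ θ + π := by linarith [hθ.1, pi_gt_three]
  rw [← integral_interval_add_Ioi' (hcont.intervalIntegrable _ _)
      (integrableOn_Ioi_rotKernel hr hs hd (by linarith : (0 : ℝ) < θ + π)),
    ← integral_add_adjacent_intervals (b := θ / 2) (hcont.intervalIntegrable _ _)
      (hcont.intervalIntegrable _ _)]
  have hnear := integral_rotKernel_near_le hr hs hθ hd
  have hmid := integral_rotKernel_mid_le hr hs hθ hd
  have htail := setIntegral_Ioi_rotKernel_le hr hs hd hT
  have h8 : 8 / cosineLaw r s θ ≤ 8 * (1 + min r s) / cosineLaw r s θ := by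
    gcongr; linarith [le_min hr hs]
  have : 208 * (1 + (1 + min r s) / cosineLaw r s θ) =
      208 + 8 * (1 + min r s) / cosineLaw r s θ + 200 * (1 + min r s) / cosineLaw r s θ := by ring
  linarith

end RotKernel

/-- the key kernel estimate
`∫₀^∞ (|x−R_a y|² + a²)^{−3/2} da ≤ C (1 + (1 + min(|x|,|y|))/|x−y|²)`. -/
theorem stmt_8 : ∃ C > (0:ℝ), ∀ x y : ℝ × ℝ, x ≠ y →
    (∫ a in Set.Ioi (0:ℝ), 1 / Real.sqrt (vnorm (x - vrot a y) ^ 2 + a ^ 2) ^ 3)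
      ≤ C * (1 + (1 + min (vnorm x) (vnorm y)) / vnorm (x - y) ^ 2) := by
  refine ⟨208, by norm_num, fun x y hxy => ?_⟩
  obtain ⟨θ, hθ, hdot, hcross⟩ := exists_angle_dot_cross x y
  have hrot := vnorm_sub_vrot_sq hdot hcross
  have hd : vnorm (x - y) ^ 2 = cosineLaw (vnorm x) (vnorm y) θ := by
    simpa [vrot_zero, cosineLaw_neg] using hrot 0
  have hpos : 0 < vnorm (x - y) ^ 2 := pow_pos (vnorm_pos (sub_ne_zero.mpr hxy)) 2
  simp_rw [hrot]
  rw [hd] at hpos ⊢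
  exact integral_rotKernel_le (vnorm_nonneg x) (vnorm_nonneg y) hθ hpos
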